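/- arXiv:1804.10262 — 2 statements merged into one kernel-verified Lean document; each statement's English description precedes it below -/
import Mathlib

section
/- Let κ⁺ > m > 0 and let a⁺ be a probability density on ℝ^d with finite exponential moments A_ξ(λ) and A_{−ξ}(λ') for some λ, λ' > 0, and finite first directional moments. Define m_ξ = κ⁺ ∫ x·ξ a⁺(x) dx and c*(ξ) = inf_{λ>0} (κ⁺ A_ξ(λ) − m)/λ. Then c*(ξ) + c*(−ξ) > 0. -/
open MeasureTheory Real
open scoped InnerProductSpace

lemma exp_moment_lower_bound {d : ℕ}
    (a : EuclideanSpace ℝ (Fin d) → ℝ) (ha : Integrable a)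
    (ha0 : ∀ x, 0 ≤ a x) (ha1 : ∫ x, a x = 1)
    (v : EuclideanSpace ℝ (Fin d))
    (hmom : Integrable (fun x => ⟪x, v⟫_ℝ * a x))
    (l : ℝ)
    (hint : Integrable (fun x => a x * Real.exp (l * ⟪x, v⟫_ℝ))) :
    1 + l * (∫ x, ⟪x, v⟫_ℝ * a x) ≤ ∫ x, a x * Real.exp (l * ⟪x, v⟫_ℝ) := by
  have key : ∫ x, (a x + l * (⟪x, v⟫_ℝ * a x)) ≤ ∫ x, a x * Real.exp (l * ⟪x, v⟫_ℝ) := by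
    apply integral_mono (ha.add (hmom.const_mul l)) hint
    intro x
    have h1 : 1 + l * ⟪x, v⟫_ℝ ≤ Real.exp (l * ⟪x, v⟫_ℝ) := by
      linarith [Real.add_one_le_exp (l * ⟪x, v⟫_ℝ)]
    have := mul_le_mul_of_nonneg_left h1 (ha0 x)
    simp only [Pi.add_apply]
    nlinarith [ha0 x]
  rw [integral_add ha (hmom.const_mul l), integral_const_mul, ha1] at key
  exact key

/-- with `κ⁺ > m > 0`, a probability density `a⁺` having finite
exponential moments in the directions `ξ` and `−ξ` and a finite first
directional moment, the minimal speeds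
`c*(±ξ) = inf_{λ>0} (κ⁺ A_{±ξ}(λ) − m)/λ` (here assumed attained at minimizers
`λ₊, λ₋ > 0`) satisfy `c*(ξ) + c*(−ξ) > 0`. -/
theorem minimal_speeds_opposite_sum_pos {d : ℕ}
    (κ m : ℝ) (hm : 0 < m) (hκm : m < κ)
    (a : EuclideanSpace ℝ (Fin d) → ℝ) (ha : Integrable a)
    (ha0 : ∀ x, 0 ≤ a x) (ha1 : ∫ x, a x = 1)
    (ξ : EuclideanSpace ℝ (Fin d)) (hξ : ‖ξ‖ = 1)
    (hmom : Integrable (fun x => |⟪x, ξ⟫_ℝ| * a x))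
    (lp lm : ℝ) (hlp : 0 < lp) (hlm : 0 < lm)
    (hintp : Integrable (fun x => a x * Real.exp (lp * ⟪x, ξ⟫_ℝ)))
    (hintm : Integrable (fun x => a x * Real.exp (lm * ⟪x, -ξ⟫_ℝ)))
    (cp cm : ℝ)
    (hcp : cp = (κ * (∫ x, a x * Real.exp (lp * ⟪x, ξ⟫_ℝ)) - m) / lp)
    (hcm : cm = (κ * (∫ x, a x * Real.exp (lm * ⟪x, -ξ⟫_ℝ)) - m) / lm)
    (hminp : ∀ l : ℝ, 0 < l → Integrable (fun x => a x * Real.exp (l * ⟪x, ξ⟫_ℝ)) →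
      cp ≤ (κ * (∫ x, a x * Real.exp (l * ⟪x, ξ⟫_ℝ)) - m) / l)
    (hminm : ∀ l : ℝ, 0 < l → Integrable (fun x => a x * Real.exp (l * ⟪x, -ξ⟫_ℝ)) →
      cm ≤ (κ * (∫ x, a x * Real.exp (l * ⟪x, -ξ⟫_ℝ)) - m) / l) :
    0 < cp + cm := by
  -- integrability of the signed first moment
  have hmomξ : Integrable (fun x => ⟪x, ξ⟫_ℝ * a x) := by
    refine hmom.mono' ?_ ?_
    · exact ((continuous_id.inner continuous_const).aestronglyMeasurable.mul
        ha.aestronglyMeasurable)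
    · filter_upwards with x
      rw [Real.norm_eq_abs, abs_mul, abs_of_nonneg (ha0 x)]
  have hmomm : Integrable (fun x => ⟪x, -ξ⟫_ℝ * a x) := by
    have : (fun x => ⟪x, -ξ⟫_ℝ * a x) = fun x => (-1) * (⟪x, ξ⟫_ℝ * a x) := by
      funext x; rw [inner_neg_right]; ring
    rw [this]; exact hmomξ.const_mul _
  set M := ∫ x, ⟪x, ξ⟫_ℝ * a x with hM
  have hMm : ∫ x, ⟪x, -ξ⟫_ℝ * a x = -M := by
    rw [hM, ← integral_neg]
    congr 1; funext x; rw [inner_neg_right]; ring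
  have hp := exp_moment_lower_bound a ha ha0 ha1 ξ hmomξ lp hintp
  have hq := exp_moment_lower_bound a ha ha0 ha1 (-ξ) hmomm lm hintm
  rw [hMm] at hq
  rw [← hM] at hp
  -- cp > κ * M
  have hcp' : κ * M < cp := by
    rw [hcp, lt_div_iff₀ hlp]
    nlinarith
  have hcm' : κ * (-M) < cm := by
    rw [hcm, lt_div_iff₀ hlm]
    nlinarith
  linarith
end

section
/- Let κ⁺ > m > 0, κ⁻ = κ_l + κ_nl > 0, θ = (κ⁺−m)/κ⁻, and let u ∈ L^∞(ℝ^d) be uniformly continuous with 0 ≤ u ≤ M for M := sup u > θ, satisfying the stationary equation m u(x) + κ_l u(x)² + κ_nl (a⁻*u)(x)(u(x) − θ) = (J_θ * u)(x) for all x, where J_θ := κ⁺a⁺ − θ κ_nl a⁻ ≥ 0 with ∫ J_θ = κ⁺ − κ_nl θ. Then along any sequence x_n with u(x_n) → M, one has (a⁻ * u)(x_n) → 0. -/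
open MeasureTheory Filter Topology

/-- for a uniformly continuous stationary solution `u` with
`0 ≤ u ≤ M`, `M = sup u > θ`, of
`m u + κ_l u² + κ_nl (a⁻*u)(u − θ) = J_θ * u` with
`J_θ = κ⁺a⁺ − θκ_nl a⁻ ≥ 0`, along any sequence `xₙ` with `u(xₙ) → M` one has
`(a⁻ * u)(xₙ) → 0`. -/
theorem convolution_vanishes_at_max_sequence {d : ℕ}
    (κp m κl κnl θ M : ℝ) (hm : 0 < m) (hκm : m < κp)
    (hκl : 0 ≤ κl) (hκnl : 0 ≤ κnl) (hκ : 0 < κl + κnl)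
    (hθ : θ = (κp - m) / (κl + κnl))
    (ap am : EuclideanSpace ℝ (Fin d) → ℝ)
    (hap : Integrable ap) (ham : Integrable am)
    (hap0 : ∀ x, 0 ≤ ap x) (ham0 : ∀ x, 0 ≤ am x)
    (hap1 : ∫ x, ap x = 1) (ham1 : ∫ x, am x = 1)
    (hdom : ∀ᵐ x : EuclideanSpace ℝ (Fin d), κnl * θ * am x ≤ κp * ap x)
    (u : EuclideanSpace ℝ (Fin d) → ℝ) (hu : UniformContinuous u)
    (hu0 : ∀ x, 0 ≤ u x) (huM : ∀ x, u x ≤ M)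
    (hM : IsLUB (Set.range u) M) (hMθ : θ < M)
    (heq : ∀ x, m * u x + κl * (u x) ^ 2 +
        κnl * (∫ y, am (x - y) * u y) * (u x - θ) =
      ∫ y, (κp * ap (x - y) - θ * κnl * am (x - y)) * u y) :
    ∀ x : ℕ → EuclideanSpace ℝ (Fin d),
      Tendsto (fun n => u (x n)) atTop (𝓝 M) →
      Tendsto (fun n => ∫ y, am (x n - y) * u y) atTop (𝓝 0) := by
  intro x hx
  have hθ0 : 0 ≤ θ := by
    rw [hθ]; exact div_nonneg (by linarith) hκ.le
  have hM0 : 0 < M := lt_of_le_of_lt hθ0 hMθ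
  have hum : Measurable u := hu.continuous.measurable
  have mp : ∀ z : EuclideanSpace ℝ (Fin d),
      MeasurePreserving (fun y => z - y) (volume : Measure (EuclideanSpace ℝ (Fin d))) volume :=
    fun z => Measure.measurePreserving_sub_left volume z
  have hA0 : ∀ z : EuclideanSpace ℝ (Fin d), 0 ≤ ∫ y, am (z - y) * u y := fun z =>
    integral_nonneg fun y => mul_nonneg (ham0 _) (hu0 _)
  -- key inequality
  have key : ∀ z : EuclideanSpace ℝ (Fin d),
      m * u z + κl * (u z) ^ 2 + κnl * (∫ y, am (z - y) * u y) * (u z - θ)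
        ≤ M * (κp - θ * κnl) := by
    intro z
    rw [heq z]
    have hapz : Integrable (fun y => ap (z - y)) := hap.comp_sub_left z
    have hamz : Integrable (fun y => am (z - y)) := ham.comp_sub_left z
    have hJ : Integrable (fun y => κp * ap (z - y) - θ * κnl * am (z - y)) :=
      (hapz.const_mul κp).sub (hamz.const_mul (θ * κnl))
    have hbd : ∀ᵐ y : EuclideanSpace ℝ (Fin d), ‖u y‖ ≤ M :=
      Eventually.of_forall fun y => by
        rw [Real.norm_eq_abs, abs_of_nonneg (hu0 y)]; exact huM y
    have hJu : Integrable (fun y => (κp * ap (z - y) - θ * κnl * am (z - y)) * u y) := by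
      have := hJ.bdd_mul (hum.aestronglyMeasurable) hbd
      exact this.congr (Eventually.of_forall fun y => mul_comm _ _)
    have hle : ∀ᵐ y : EuclideanSpace ℝ (Fin d),
        (κp * ap (z - y) - θ * κnl * am (z - y)) * u y
          ≤ M * (κp * ap (z - y) - θ * κnl * am (z - y)) := by
      filter_upwards [(mp z).quasiMeasurePreserving.tendsto_ae.eventually hdom] with y hy
      have h0 : 0 ≤ κp * ap (z - y) - θ * κnl * am (z - y) := by nlinarith
      calc (κp * ap (z - y) - θ * κnl * am (z - y)) * u y
          ≤ (κp * ap (z - y) - θ * κnl * am (z - y)) * M :=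
            mul_le_mul_of_nonneg_left (huM y) h0
        _ = M * (κp * ap (z - y) - θ * κnl * am (z - y)) := by ring
    calc (∫ y, (κp * ap (z - y) - θ * κnl * am (z - y)) * u y)
        ≤ ∫ y, M * (κp * ap (z - y) - θ * κnl * am (z - y)) :=
          integral_mono_ae hJu (hJ.const_mul M) hle
      _ = M * (κp * (∫ y, ap (z - y)) - θ * κnl * (∫ y, am (z - y))) := by
          rw [integral_const_mul, integral_sub (hapz.const_mul κp) (hamz.const_mul (θ * κnl)),
            integral_const_mul, integral_const_mul]
      _ = M * (κp - θ * κnl) := by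
          rw [integral_sub_left_eq_self ap volume z, integral_sub_left_eq_self am volume z,
            hap1, ham1]; ring
  -- notation
  set A : ℕ → ℝ := fun n => ∫ y, am (x n - y) * u y with hA
  -- eventually u (x n) > θ
  have hev : ∀ᶠ n in atTop, θ < u (x n) :=
    hx (Ioi_mem_nhds hMθ)
  -- upper bound function
  have hg : Tendsto (fun n => (M * (κp - θ * κnl) - m * u (x n) - κl * (u (x n)) ^ 2)
      / (u (x n) - θ)) atTop (𝓝 ((M * (κp - θ * κnl) - m * M - κl * M ^ 2) / (M - θ))) := by
    apply Tendsto.div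
    · exact (tendsto_const_nhds.sub (hx.const_mul m)).sub ((hx.pow 2).const_mul κl)
    · exact hx.sub tendsto_const_nhds
    · exact sub_ne_zero_of_ne (ne_of_gt hMθ)
  have hnum : M * (κp - θ * κnl) - m * M - κl * M ^ 2 = -(κl * M) * (M - θ) := by
    have : θ * (κl + κnl) = κp - m := by
      rw [hθ]; field_simp
    nlinarith [this]
  have hglim : (M * (κp - θ * κnl) - m * M - κl * M ^ 2) / (M - θ) = -(κl * M) := by
    rw [hnum, mul_div_assoc, div_self (sub_ne_zero_of_ne (ne_of_gt hMθ)), mul_one]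
  rw [hglim] at hg
  -- eventual bound  κnl * A n ≤ g n
  have hbound : ∀ᶠ n in atTop, κnl * A n ≤
      (M * (κp - θ * κnl) - m * u (x n) - κl * (u (x n)) ^ 2) / (u (x n) - θ) := by
    filter_upwards [hev] with n hn
    rw [le_div_iff₀ (by linarith)]
    have := key (x n)
    nlinarith [this]
  have hlow : ∀ n, 0 ≤ κnl * A n := fun n => mul_nonneg hκnl (hA0 _)
  -- the limit must be ≥ 0, forcing κl * M = 0, hence κl = 0 and κnl > 0
  have hge : (0:ℝ) ≤ -(κl * M) :=
    ge_of_tendsto hg (hbound.mono fun n hn => le_trans (hlow n) hn)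
  have hκl0 : κl = 0 := by nlinarith
  have hκnl0 : 0 < κnl := by rw [hκl0] at hκ; simpa using hκ
  -- squeeze
  have hsq : Tendsto (fun n => κnl * A n) atTop (𝓝 0) := by
    have hz : -(κl * M) = 0 := by rw [hκl0]; ring
    rw [hz] at hg
    exact tendsto_of_tendsto_of_tendsto_of_le_of_le' tendsto_const_nhds hg
      (Eventually.of_forall hlow) hbound
  have : Tendsto (fun n => κnl⁻¹ * (κnl * A n)) atTop (𝓝 (κnl⁻¹ * 0)) := hsq.const_mul _
  simpa [mul_comm, inv_mul_cancel_left₀ (ne_of_gt hκnl0), mul_zero] using this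
end
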